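/- arXiv:2603.01671 — 6 statements merged into one kernel-verified Lean document; each statement's English description precedes it below -/
import Mathlib

section
/- For α ∈ ℝ ∪ {∞} and c ∈ F×, the subgroup 𝔘^α = {a ∈ F× : d(a) ≥ α} is contained in the norm group N(c) = {x ∈ F× : (x,c)_𝔭 = 1} if and only if α + d(c) > 2e. -/
/-- For `α ∈ ℝ ∪ {∞}` and `c ∈ F×`, the group
`𝔘^α = {a ∈ F× : d a ≥ α}` is contained in the norm group
`N(c) = {x ∈ F× : (x,c)_𝔭 = 1}` iff `α + d c > 2e`.
Here `F` is a dyadic local field with `e = ord 2`, `d` the order of the relative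
quadratic defect and `hilb` the Hilbert symbol; the standard facts about `d` and the
Hilbert symbol are taken as hypotheses. -/
theorem Uset_subset_norm_group_iff {F : Type*} [Field F]
    (e : ℝ) (he : 0 < e)
    (d : F → EReal) (hilb : F → F → ℤ)
    (hd0 : ∀ x : F, x ≠ 0 → 0 ≤ d x)
    (hinf : ∀ x : F, x ≠ 0 → (d x = ⊤ ↔ ∃ y : F, y ≠ 0 ∧ x = y ^ 2))
    (hdom : ∀ a b : F, a ≠ 0 → b ≠ 0 → min (d a) (d b) ≤ d (a * b))
    (hsymm : ∀ a b : F, hilb a b = hilb b a)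
    (hsuff : ∀ a b : F, a ≠ 0 → b ≠ 0 → ((2 * e : ℝ) : EReal) < d a + d b → hilb a b = 1)
    (hex : ∀ a : F, a ≠ 0 → d a < ⊤ →
      ∃ b : F, b ≠ 0 ∧ d b = ((2 * e : ℝ) : EReal) - d a ∧ hilb a b = -1)
    (α : EReal) (hα : α ≠ ⊥) (c : F) (hc : c ≠ 0) :
    {x : F | x ≠ 0 ∧ α ≤ d x} ⊆ {x : F | x ≠ 0 ∧ hilb x c = 1} ↔
      ((2 * e : ℝ) : EReal) < α + d c := by
  have hdc0 : (0 : EReal) ≤ d c := hd0 c hc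
  have hdcbot : d c ≠ ⊥ := fun h => by simp [h] at hdc0
  constructor
  · intro h
    by_contra hlt
    push_neg at hlt
    have hdctop : d c ≠ ⊤ := by
      intro htop
      rw [htop, EReal.add_top_of_ne_bot hα] at hlt
      exact (lt_irrefl _ (lt_of_le_of_lt hlt (EReal.coe_lt_top _))).elim
    obtain ⟨b, hb0, hdb, hhb⟩ := hex c hc (lt_top_iff_ne_top.mpr hdctop)
    have hαb : α ≤ d b := by
      rw [hdb]
      exact (EReal.le_sub_iff_add_le (Or.inl hdcbot) (Or.inl hdctop)).mpr hlt
    have := (h ⟨hb0, hαb⟩).2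
    rw [hsymm b c] at this
    omega
  · intro h x ⟨hx0, hxd⟩
    refine ⟨hx0, hsuff x c hx0 hc (lt_of_lt_of_le h ?_)⟩
    exact add_le_add_left hxd _
end

section
/- For every a ∈ F×/F×² and R ∈ ℝ one has ĝ(a,R) ⊆ 𝔘^R; in particular if R > 2e then ĝ(a,R) = F×². -/
noncomputable section

/-- `𝔘^α = {x ∈ F× : d x ≥ α}`. -/
def Uset {F : Type*} [Field F] (d : F → EReal) (α : EReal) : Set F :=
  {x : F | x ≠ 0 ∧ α ≤ d x}

/-- The norm group `N(c) = {x ∈ F× : (x,c)_𝔭 = 1}`. -/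
def Nset {F : Type*} [Field F] (hilb : F → F → ℤ) (c : F) : Set F :=
  {x : F | x ≠ 0 ∧ hilb x c = 1}

/-- `ĝ(a,R) = 𝔘^{α(a,R)} ∩ N(-a)` with `α(a,R) = min{R/2 + e, R + d(-a)}`. -/
def ghat {F : Type*} [Field F] (d : F → EReal) (hilb : F → F → ℤ) (e : ℝ)
    (a : F) (R : ℝ) : Set F :=
  Uset d (min ((R / 2 + e : ℝ) : EReal) ((R : ℝ) + d (-a))) ∩ Nset hilb (-a)

/-- `ĝ(a,R) ⊆ 𝔘^R`; in particular if `R > 2e` then `ĝ(a,R) = F×²`. -/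
theorem ghat_subset_Uset {F : Type*} [Field F]
    (e : ℝ) (he : 0 < e) (d : F → EReal) (hilb : F → F → ℤ)
    (hd0 : ∀ x : F, x ≠ 0 → 0 ≤ d x)
    (hbound : ∀ x : F, x ≠ 0 → d x ≠ ⊤ → d x ≤ ((2 * e : ℝ) : EReal))
    (hinf : ∀ x : F, x ≠ 0 → (d x = ⊤ ↔ ∃ y : F, y ≠ 0 ∧ x = y ^ 2))
    (hsqN : ∀ y c : F, y ≠ 0 → hilb (y ^ 2) c = 1)
    (a : F) (ha : a ≠ 0) (R : ℝ) :
    ghat d hilb e a R ⊆ Uset d ((R : ℝ) : EReal) ∧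
    (2 * e < R → ghat d hilb e a R = {x : F | ∃ y : F, y ≠ 0 ∧ x = y ^ 2}) := by

  have h1 : ghat d hilb e a R ⊆ Uset d ((R : ℝ) : EReal) := by
    rintro x ⟨⟨hx0, hmin⟩, hxN⟩
    refine ⟨hx0, ?_⟩
    by_cases htop : d x = ⊤
    · simp [htop]
    · have hdx0 := hd0 x hx0
      have hdx2e := hbound x hx0 htop
      have hbot : d x ≠ ⊥ := fun h => by simp [h] at hdx0
      obtain ⟨t, ht⟩ : ∃ t : ℝ, d x = (t : EReal) :=
        ⟨(d x).toReal, (EReal.coe_toReal htop hbot).symm⟩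
      rw [ht] at hdx0 hdx2e ⊢
      rcases min_le_iff.mp (ht ▸ hmin) with h | h
      · have h1 : R / 2 + e ≤ t := by exact_mod_cast h
        have h2 : t ≤ 2 * e := by exact_mod_cast hdx2e
        have : R ≤ t := by linarith
        exact_mod_cast this
      · have hna : (-a : F) ≠ 0 := neg_ne_zero.mpr ha
        by_cases hatop : d (-a) = ⊤
        · rw [hatop] at h
          have : ((R : ℝ) : EReal) + ⊤ = ⊤ := by
            rw [EReal.add_top_iff_ne_bot]; exact EReal.coe_ne_bot R
          rw [this] at h
          exact absurd (top_le_iff.mp h) (EReal.coe_ne_top t)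
        · have hda0 := hd0 (-a) hna
          have : ((R : ℝ) : EReal) ≤ ((R : ℝ) : EReal) + d (-a) := by
            nth_rewrite 1 [← add_zero ((R : ℝ) : EReal)]
            exact add_le_add le_rfl hda0
          exact this.trans h
  refine ⟨h1, fun hR => ?_⟩
  ext x
  constructor
  · intro hx
    obtain ⟨hx0, hRdx⟩ := h1 hx
    by_cases htop : d x = ⊤
    · exact (hinf x hx0).mp htop
    · exact absurd (hRdx.trans (hbound x hx0 htop))
        (by exact_mod_cast not_le.mpr hR)
  · rintro ⟨y, hy, rfl⟩
    have hx0 : y ^ 2 ≠ 0 := pow_ne_zero _ hy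
    have hd : d (y ^ 2) = ⊤ := (hinf _ hx0).mpr ⟨y, hy, rfl⟩
    exact ⟨⟨hx0, by simp [hd]⟩, hx0, hsqN y (-a) hy⟩
end
end

section
/- For a ∈ F×/F×² and R ∈ ℝ one has ĝ(a,R) ⊆ Ḡ(a,R) ⊆ N(−a), where Ḡ(a,R) = ⟨a⟩·ĝ(a, f(R)) with f(R)= min{R/2−e, R−2e}. -/
open scoped Pointwise

noncomputable section

/-- The subgroup `⟨a⟩` of `F×/F×²` generated by `a`, viewed in `F×`. -/
def spanSq {F : Type*} [Field F] (a : F) : Set F :=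
  {x : F | ∃ y : F, y ≠ 0 ∧ (x = y ^ 2 ∨ x = a * y ^ 2)}

/-- `f(R) = min{R/2 − e, R − 2e}`. -/
def fmap (e R : ℝ) : ℝ := min (R / 2 - e) (R - 2 * e)

/-- `Ḡ(a,R) = ⟨a⟩ · ĝ(a, f(R))`. -/
def Gbar {F : Type*} [Field F] (d : F → EReal) (hilb : F → F → ℤ) (e : ℝ)
    (a : F) (R : ℝ) : Set F :=
  spanSq a * ghat d hilb e a (fmap e R)

/-- `ĝ(a,R) ⊆ Ḡ(a,R) ⊆ N(−a)`. -/
theorem ghat_subset_Gbar_subset_norm {F : Type*} [Field F]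
    (e : ℝ) (he : 0 < e) (d : F → EReal) (hilb : F → F → ℤ)
    (hd0 : ∀ x : F, x ≠ 0 → 0 ≤ d x)
    (hself : ∀ x : F, x ≠ 0 → hilb x (-x) = 1)
    (hmul : ∀ x y c : F, hilb (x * y) c = hilb x c * hilb y c)
    (hsqd : ∀ x y : F, y ≠ 0 → d (x * y ^ 2) = d x)
    (hsqh : ∀ x y c : F, y ≠ 0 → hilb (x * y ^ 2) c = hilb x c)
    (a : F) (ha : a ≠ 0) (R : ℝ) :
    ghat d hilb e a R ⊆ Gbar d hilb e a R ∧
    Gbar d hilb e a R ⊆ Nset hilb (-a) := by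
  constructor
  · intro x hx
    obtain ⟨⟨hx0, hxd⟩, hxn⟩ := hx
    have hfR : fmap e R ≤ R := by
      have : R - 2 * e ≤ R := by linarith
      exact le_trans (min_le_right _ _) this
    have hmem : x ∈ ghat d hilb e a (fmap e R) → x ∈ Gbar d hilb e a R := by
      intro h
      have h1mem : (1 : F) ∈ spanSq a := ⟨1, one_ne_zero, Or.inl (one_pow 2).symm⟩
      have := Set.mul_mem_mul h1mem h
      rwa [one_mul] at this
    refine hmem ⟨⟨hx0, ?_⟩, hxn⟩
    refine le_trans (min_le_min ?_ ?_) hxd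
    · exact_mod_cast by linarith [hfR]
    · exact add_le_add_left (EReal.coe_le_coe_iff.mpr hfR) _
  · intro x hx
    rw [Gbar, Set.mem_mul] at hx
    obtain ⟨s, ⟨y, hy, hs⟩, g, ⟨-, hg0, hgn⟩, rfl⟩ := hx
    have hs0 : s ≠ 0 := by
      rcases hs with h | h <;> subst h
      · exact pow_ne_zero 2 hy
      · exact mul_ne_zero ha (pow_ne_zero 2 hy)
    have h1 : hilb (1 : F) (-a) = 1 := by
      have := hsqh (a * a) a⁻¹ (-a) (inv_ne_zero ha)
      have heq : a * a * a⁻¹ ^ 2 = 1 := by field_simp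
      rw [heq] at this
      rw [this, hmul, hself a ha]; norm_num
    have hsn : hilb s (-a) = 1 := by
      rcases hs with h | h <;> subst h
      · have := hsqh 1 y (-a) hy
        rw [one_mul] at this
        rw [this, h1]
      · rw [hsqh a y (-a) hy, hself a ha]
    exact ⟨mul_ne_zero hs0 hg0, by rw [hmul, hsn, hgn, one_mul]⟩
end
end

section
/- Δ belongs to ĝ(a,R) if and only if ord a is even and R ≤ 2e, where Δ is a unit of quadratic defect 4𝒪 (i.e. d(Δ) = 2e). -/
noncomputable section

/-- `Δ ∈ ĝ(a,R)` iff `ord a` is even and `R ≤ 2e`, where `Δ` is a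
unit of quadratic defect `4𝒪`, i.e. `d(Δ) = 2e`. -/
theorem delta_mem_ghat_iff {F : Type*} [Field F]
    (e : ℝ) (he : 0 < e) (d : F → EReal) (hilb : F → F → ℤ) (ord : F → ℤ)
    (Δ : F) (hΔ0 : Δ ≠ 0)
    (hdΔ : d Δ = ((2 * e : ℝ) : EReal))
    (hd0 : ∀ x : F, x ≠ 0 → 0 ≤ d x)
    (hΔN : ∀ a : F, a ≠ 0 → (hilb Δ (-a) = 1 ↔ Even (ord a)))
    (hU2e : Uset d ((2 * e : ℝ) : EReal) =
      {x : F | ∃ y : F, y ≠ 0 ∧ (x = y ^ 2 ∨ x = Δ * y ^ 2)})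
    (hUtop : ∀ α : EReal, ((2 * e : ℝ) : EReal) < α →
      Uset d α = {x : F | ∃ y : F, y ≠ 0 ∧ x = y ^ 2})
    (hg2e : ∀ a : F, a ≠ 0 → 0 < d (-a) →
      ghat d hilb e a (2 * e) = Uset d ((2 * e : ℝ) : EReal))
    (a : F) (ha : a ≠ 0) (R : ℝ) :
    Δ ∈ ghat d hilb e a R ↔ Even (ord a) ∧ R ≤ 2 * e := by
  have hna : (-a) ≠ 0 := neg_ne_zero.mpr ha
  simp only [ghat, Uset, Nset, Set.mem_inter_iff, Set.mem_setOf_eq]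
  constructor
  · rintro ⟨⟨-, hU⟩, -, hN⟩
    refine ⟨(hΔN a ha).mp hN, ?_⟩
    by_contra hR
    push_neg at hR
    rw [hdΔ] at hU
    have h1 : ((2 * e : ℝ) : EReal) < ((R / 2 + e : ℝ) : EReal) := by
      exact_mod_cast (by linarith : (2 * e : ℝ) < R / 2 + e)
    have h2 : ((2 * e : ℝ) : EReal) < ((R : ℝ) : EReal) + d (-a) :=
      lt_of_lt_of_le (by exact_mod_cast hR) (le_add_of_nonneg_right (hd0 _ hna))
    exact absurd hU (not_le.mpr (lt_min h1 h2))
  · rintro ⟨hev, hR⟩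
    refine ⟨⟨hΔ0, ?_⟩, hΔ0, (hΔN a ha).mpr hev⟩
    rw [hdΔ]
    calc min ((R / 2 + e : ℝ) : EReal) (((R : ℝ) : EReal) + d (-a))
        ≤ ((R / 2 + e : ℝ) : EReal) := min_le_left _ _
      _ ≤ ((2 * e : ℝ) : EReal) := by
          exact_mod_cast (by linarith : (R / 2 + e : ℝ) ≤ 2 * e)
end
end

section
/- Suppose Ḡ(aᵢ,Rᵢ) ⊆ 𝒪×F×² for 1 ≤ i ≤ s, and let R ∈ ℝ with R ≥ −2e and R ≥ Rᵢ for all i. Then Ḡ((−1)^{s−1} a₁a₂⋯a_s, R) ⊆ 𝒪×F×². -/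
open scoped Pointwise Classical

noncomputable section

/-- `𝒪×F×²`: the set of nonzero elements of even order. -/
def OU {F : Type*} [Field F] (ord : F → ℤ) : Set F :=
  {x : F | x ≠ 0 ∧ Even (ord x)}

/-- `Ḡ(a,R) = ⟨a⟩ · ĝ(a, f(R))`, with the convention `Ḡ(−1,−2e) = 𝒪×F×²`. -/
def GbarC {F : Type*} [Field F] (d : F → EReal) (hilb : F → F → ℤ) (ord : F → ℤ)
    (e : ℝ) (a : F) (R : ℝ) : Set F :=
  if (∃ y : F, y ≠ 0 ∧ a = -(y ^ 2)) ∧ R = -(2 * e) then OU ord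
  else spanSq a * ghat d hilb e a (fmap e R)


private lemma dprod_le {F : Type*} [Field F] (d : F → EReal)
    (hdom : ∀ a b : F, a ≠ 0 → b ≠ 0 → min (d a) (d b) ≤ d (a * b))
    (α : EReal) {ι : Type*} (t : Finset ι) (ht : t.Nonempty) (b : ι → F)
    (hb : ∀ i ∈ t, b i ≠ 0) (hα : ∀ i ∈ t, α ≤ d (b i)) :
    α ≤ d (∏ i ∈ t, b i) := by
  induction ht using Finset.Nonempty.cons_induction with
  | singleton i => simpa using hα i (by simp)
  | cons i t hi ht ih =>
    rw [Finset.prod_cons]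
    refine le_trans ?_ (hdom _ _ (hb i (by simp))
      (Finset.prod_ne_zero_iff.mpr fun j hj => hb j (by simp [hj])))
    refine le_min (hα i (by simp)) (ih (fun j hj => hb j (by simp [hj]))
      (fun j hj => hα j (by simp [hj])))

private lemma dprod_lt {F : Type*} [Field F] (d : F → EReal)
    (hdom : ∀ a b : F, a ≠ 0 → b ≠ 0 → min (d a) (d b) ≤ d (a * b))
    (α : EReal) {ι : Type*} (t : Finset ι) (ht : t.Nonempty) (b : ι → F)
    (hb : ∀ i ∈ t, b i ≠ 0) (hα : ∀ i ∈ t, α < d (b i)) :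
    α < d (∏ i ∈ t, b i) := by
  induction ht using Finset.Nonempty.cons_induction with
  | singleton i => simpa using hα i (by simp)
  | cons i t hi ht ih =>
    rw [Finset.prod_cons]
    refine lt_of_lt_of_le ?_ (hdom _ _ (hb i (by simp))
      (Finset.prod_ne_zero_iff.mpr fun j hj => hb j (by simp [hj])))
    exact lt_min (hα i (by simp)) (ih (fun j hj => hb j (by simp [hj]))
      (fun j hj => hα j (by simp [hj])))

/-- if `Ḡ(aᵢ,Rᵢ) ⊆ 𝒪×F×²` for `1 ≤ i ≤ s` and `R ≥ −2e`,
`R ≥ Rᵢ` for all `i`, then `Ḡ((−1)^{s−1}a₁⋯a_s, R) ⊆ 𝒪×F×²`. -/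
theorem Gbar_prod_subset_OU {F : Type*} [Field F]
    (e : ℝ) (he : 0 < e) (d : F → EReal) (hilb : F → F → ℤ) (ord : F → ℤ)
    (hdom : ∀ a b : F, a ≠ 0 → b ≠ 0 → min (d a) (d b) ≤ d (a * b))
    (hmono : ∀ (a : F) (R S : ℝ), R ≤ S →
      GbarC d hilb ord e a S ⊆ GbarC d hilb ord e a R)
    (hch1 : ∀ (a : F) (R : ℝ), a ≠ 0 → R < -(2 * e) →
      (GbarC d hilb ord e a R ⊆ OU ord ↔ d (-a) = ((2 * e : ℝ) : EReal)))
    (hch2 : ∀ a : F, a ≠ 0 →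
      (GbarC d hilb ord e a (-(2 * e)) ⊆ OU ord ↔ ((2 * e : ℝ) : EReal) ≤ d (-a)))
    (hch3 : ∀ (a : F) (R : ℝ), a ≠ 0 → -(2 * e) < R → R ≤ 2 * e →
      (GbarC d hilb ord e a R ⊆ OU ord ↔ ((e - R / 2 : ℝ) : EReal) < d (-a)))
    (hch4 : ∀ (a : F) (R : ℝ), a ≠ 0 → 2 * e ≤ R →
      (GbarC d hilb ord e a R ⊆ OU ord ↔ 0 < d (-a)))
    (s : ℕ) (hs : 1 ≤ s) (a : Fin s → F) (ha : ∀ i, a i ≠ 0)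
    (Rs : Fin s → ℝ)
    (hsub : ∀ i, GbarC d hilb ord e (a i) (Rs i) ⊆ OU ord)
    (R : ℝ) (hR : -(2 * e) ≤ R) (hRi : ∀ i, Rs i ≤ R) :
    GbarC d hilb ord e ((-1) ^ (s - 1) * ∏ i, a i) R ⊆ OU ord := by
  have hne : Nonempty (Fin s) := ⟨⟨0, hs⟩⟩
  set P := (-1 : F) ^ (s - 1) * ∏ i, a i with hP
  have hPne : P ≠ 0 :=
    mul_ne_zero (pow_ne_zero _ (by norm_num))
      (Finset.prod_ne_zero_iff.mpr fun i _ => ha i)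
  have hnegP : -P = ∏ i, (-(a i)) := by
    have h1 : ∏ i, (-(a i)) = (-1 : F) ^ s * ∏ i, a i := by
      calc ∏ i, (-(a i)) = ∏ i, ((-1 : F) * a i) := by simp
        _ = (∏ _i : Fin s, (-1 : F)) * ∏ i, a i := by rw [Finset.prod_mul_distrib]
        _ = (-1 : F) ^ s * ∏ i, a i := by simp
    have h2 : (-1 : F) ^ s = -(-1 : F) ^ (s - 1) := by
      conv_lhs => rw [← Nat.sub_add_cancel hs]
      rw [pow_succ]; ring
    rw [h1, h2, hP]; ring
  have hbne : ∀ i ∈ (Finset.univ : Finset (Fin s)), -(a i) ≠ 0 :=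
    fun i _ => neg_ne_zero.mpr (ha i)
  have hsubR : ∀ i, GbarC d hilb ord e (a i) R ⊆ OU ord :=
    fun i => (hmono (a i) (Rs i) R (hRi i)).trans (hsub i)
  rcases eq_or_lt_of_le hR with hcase | hcase
  · have hdi : ∀ i ∈ (Finset.univ : Finset (Fin s)),
        ((2 * e : ℝ) : EReal) ≤ d (-(a i)) := fun i _ =>
      (hch2 (a i) (ha i)).mp (by rw [hcase]; exact hsubR i)
    have hp := dprod_le d hdom _ Finset.univ Finset.univ_nonempty _ hbne hdi
    rw [← hnegP] at hp
    rw [← hcase]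
    exact (hch2 P hPne).mpr hp
  · rcases le_or_gt R (2 * e) with h2 | h2
    · have hdi : ∀ i ∈ (Finset.univ : Finset (Fin s)),
          ((e - R / 2 : ℝ) : EReal) < d (-(a i)) := fun i _ =>
        (hch3 (a i) R (ha i) hcase h2).mp (hsubR i)
      have hp := dprod_lt d hdom _ Finset.univ Finset.univ_nonempty _ hbne hdi
      rw [← hnegP] at hp
      exact (hch3 P R hPne hcase h2).mpr hp
    · have hdi : ∀ i ∈ (Finset.univ : Finset (Fin s)),
          (0 : EReal) < d (-(a i)) := fun i _ =>
        (hch4 (a i) R (ha i) h2.le).mp (hsubR i)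
      have hp := dprod_lt d hdom _ Finset.univ Finset.univ_nonempty _ hbne hdi
      rw [← hnegP] at hp
      exact (hch4 P R hPne h2.le).mpr hp
end
end

section
/- Let L be a quadratic 𝒪-lattice and L' = {x ∈ L : Q(x) ∈ 𝔭·𝔫L} its set of non–norm-generators. Then L' + 𝔭L = L'; in particular 𝔭L ⊆ L'. Moreover, if 𝔫L strictly contains 2·𝔰L, then L' is an 𝒪-sublattice of L and L/L' ≅ 𝒪/𝔭. -/
open scoped Pointwise

/-- Let `L` be a quadratic `𝒪`-lattice (on a nondegenerate quadratic
space `(V,Q)` over a dyadic local field `F` with valuation ring `𝒪`, a DVR with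
maximal ideal `𝔭` and residue field of characteristic 2) and
`L' = {x ∈ L : Q x ∈ 𝔭·𝔫L}` its set of non–norm-generators. Then `L' + 𝔭L = L'`,
in particular `𝔭L ⊆ L'`; moreover, if `𝔫L` strictly contains `2·𝔰L` then `L'` is
an `𝒪`-sublattice of `L` and `L/L' ≅ 𝒪/𝔭`. -/
theorem nonNormGenerators_structure
    {F : Type*} [Field F] {O : Type*} [CommRing O] [IsDomain O]
    [IsDiscreteValuationRing O] [Algebra O F]
    (halg : Function.Injective (algebraMap O F))
    {V : Type*} [AddCommGroup V] [Module F V] [Module O V] [IsScalarTower O F V]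
    (Q : QuadraticMap F V F)
    (hQnd : (QuadraticMap.polarBilin Q).Nondegenerate)
    (h2F : (2 : F) ≠ 0)
    (h2O : (2 : O) ∈ IsLocalRing.maximalIdeal O)
    (hres : ∀ η : O, IsUnit η → ∃ δ : O, IsUnit δ ∧ η + δ ^ 2 ∈ IsLocalRing.maximalIdeal O)
    (L : Submodule O V)
    (nL : Submodule O F) (hnL : nL = Submodule.span O (⇑Q '' (L : Set V)))
    (twoSL : Submodule O F)
    (htwoSL : twoSL = Submodule.span O
      (Set.image2 (fun x y => QuadraticMap.polar (⇑Q) x y) (L : Set V) (L : Set V)))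
    (hng : ∃ x ∈ L, Submodule.span O {Q x} = nL)
    (L' : Set V)
    (hL' : L' = {x : V | x ∈ L ∧ Q x ∈ (IsLocalRing.maximalIdeal O) • nL}) :
    L' + ((IsLocalRing.maximalIdeal O • L : Submodule O V) : Set V) = L' ∧
    ((IsLocalRing.maximalIdeal O • L : Submodule O V) : Set V) ⊆ L' ∧
    (twoSL < nL →
      ∃ L'' : Submodule O V, (L'' : Set V) = L' ∧
        Nonempty ((↥L ⧸ Submodule.comap L.subtype L'') ≃ₗ[O]
          (O ⧸ IsLocalRing.maximalIdeal O))) := by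
  classical
  set 𝔭 := IsLocalRing.maximalIdeal O with h𝔭
  -- basic membership facts
  have hQL : ∀ x ∈ L, Q x ∈ nL := fun x hx =>
    hnL ▸ Submodule.subset_span ⟨x, hx, rfl⟩
  have hpolar_nL : ∀ x ∈ L, ∀ y ∈ L, QuadraticMap.polar (⇑Q) x y ∈ nL := by
    intro x hx y hy
    have h : QuadraticMap.polar (⇑Q) x y = Q (x + y) - Q x - Q y := rfl
    rw [h]
    exact sub_mem (sub_mem (hQL _ (add_mem hx hy)) (hQL _ hx)) (hQL _ hy)
  -- key: elements of 𝔭L have Q-value in 𝔭nL and polar-value in 𝔭nL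
  have key : ∀ z ∈ (𝔭 • L : Submodule O V),
      z ∈ L ∧ Q z ∈ 𝔭 • nL ∧ ∀ x ∈ L, QuadraticMap.polar (⇑Q) x z ∈ 𝔭 • nL := by
    intro z hz
    refine Submodule.smul_induction_on hz ?_ ?_
    · intro r hr n hn
      refine ⟨Submodule.smul_mem _ _ hn, ?_, ?_⟩
      · have h : Q (r • n) = r • (r • Q n) := by
          rw [QuadraticMap.map_smul_of_tower, smul_smul]
        rw [h]
        exact Submodule.smul_mem_smul hr (Submodule.smul_mem _ _ (hQL n hn))
      · intro x hx
        rw [QuadraticMap.polar_smul_right_of_tower]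
        exact Submodule.smul_mem_smul hr (hpolar_nL x hx n hn)
    · rintro z w ⟨hzL, hzQ, hzP⟩ ⟨hwL, hwQ, hwP⟩
      refine ⟨add_mem hzL hwL, ?_, ?_⟩
      · rw [QuadraticMap.map_add (⇑Q) z w]
        exact add_mem (add_mem hzQ hwQ) (hwP z hzL)
      · intro x hx
        rw [QuadraticMap.polar_add_right]
        exact add_mem (hzP x hx) (hwP x hx)
  -- membership in L'
  have hmemL' : ∀ x, x ∈ L' ↔ x ∈ L ∧ Q x ∈ 𝔭 • nL := by
    intro x; rw [hL']; exact Iff.rfl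
  have part2 : ((𝔭 • L : Submodule O V) : Set V) ⊆ L' := by
    intro z hz
    obtain ⟨h1, h2, _⟩ := key z hz
    exact (hmemL' z).2 ⟨h1, h2⟩
  have part1 : L' + ((𝔭 • L : Submodule O V) : Set V) = L' := by
    apply Set.eq_of_subset_of_subset
    · rintro _ ⟨x, hx, b, hb, rfl⟩
      obtain ⟨hxL, hxQ⟩ := (hmemL' x).1 hx
      obtain ⟨hbL, hbQ, hbP⟩ := key b hb
      refine (hmemL' _).2 ⟨add_mem hxL hbL, ?_⟩
      rw [QuadraticMap.map_add (⇑Q) x b]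
      exact add_mem (add_mem hxQ hbQ) (hbP x hxL)
    · intro x hx
      exact ⟨x, hx, 0, (𝔭 • L).zero_mem, add_zero x⟩
  refine ⟨part1, part2, ?_⟩
  intro hlt
  -- norm generator
  obtain ⟨x₀, hx₀L, hx₀gen⟩ := hng
  have htwoSL_le : twoSL ≤ nL := by
    rw [htwoSL]
    refine Submodule.span_le.2 ?_
    rintro _ ⟨x, hx, y, hy, rfl⟩
    exact hpolar_nL x hx y hy
  have ha0 : Q x₀ ≠ 0 := by
    intro h0
    have hbot : nL = ⊥ := by rw [← hx₀gen, h0]; simp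
    exact hlt.not_ge (hbot ▸ bot_le)
  -- twoSL ⊆ 𝔭 nL
  have htwoSL_p : twoSL ≤ 𝔭 • nL := by
    intro t ht
    have htn : t ∈ nL := htwoSL_le ht
    rw [← hx₀gen] at htn
    obtain ⟨c, hc⟩ := Submodule.mem_span_singleton.1 htn
    by_cases hcp : c ∈ 𝔭
    · rw [← hx₀gen, ← hc]
      exact Submodule.smul_mem_smul hcp (Submodule.mem_span_singleton_self _)
    · exfalso
      have hcu : IsUnit c := by
        by_contra hnu
        exact hcp ((IsLocalRing.mem_maximalIdeal c).2 hnu)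
      obtain ⟨u, rfl⟩ := hcu
      have haT : Q x₀ ∈ twoSL := by
        have h1 : (↑u⁻¹ : O) • t ∈ twoSL := Submodule.smul_mem _ _ ht
        rwa [← hc, smul_smul, u.inv_mul, one_smul] at h1
      exact hlt.not_ge (hx₀gen ▸ (Submodule.span_le.2 (by simpa using haT)))
  -- the submodule L''
  have hadd : ∀ {x y : V}, (x ∈ L ∧ Q x ∈ 𝔭 • nL) → (y ∈ L ∧ Q y ∈ 𝔭 • nL) →
      (x + y ∈ L ∧ Q (x + y) ∈ 𝔭 • nL) := by
    rintro x y ⟨hxL, hxQ⟩ ⟨hyL, hyQ⟩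
    refine ⟨add_mem hxL hyL, ?_⟩
    rw [QuadraticMap.map_add (⇑Q) x y]
    refine add_mem (add_mem hxQ hyQ) (htwoSL_p ?_)
    rw [htwoSL]
    exact Submodule.subset_span ⟨x, hxL, y, hyL, rfl⟩
  have hsmul : ∀ (c : O) {x : V}, (x ∈ L ∧ Q x ∈ 𝔭 • nL) →
      (c • x ∈ L ∧ Q (c • x) ∈ 𝔭 • nL) := by
    rintro c x ⟨hxL, hxQ⟩
    refine ⟨Submodule.smul_mem _ _ hxL, ?_⟩
    rw [QuadraticMap.map_smul_of_tower, ← smul_smul]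
    exact Submodule.smul_mem _ _ (Submodule.smul_mem _ _ hxQ)
  set L'' : Submodule O V :=
    { carrier := {x | x ∈ L ∧ Q x ∈ 𝔭 • nL}
      add_mem' := fun hx hy => hadd hx hy
      zero_mem' := ⟨L.zero_mem, by simp⟩
      smul_mem' := fun c _ hx => hsmul c hx } with hL''def
  refine ⟨L'', by rw [hL']; rfl, ?_⟩
  set M := Submodule.comap L.subtype L'' with hM
  have hmemM : ∀ y : L, y ∈ M ↔ Q (y : V) ∈ 𝔭 • nL := by
    intro y
    constructor
    · exact fun h => h.2
    · exact fun h => ⟨y.2, h⟩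
  -- membership characterization for multiples of the norm generator
  have hpnl : ∀ c : O, (c • Q x₀ ∈ 𝔭 • nL ↔ c ∈ 𝔭) := by
    intro c
    constructor
    · intro h
      rw [← hx₀gen, Submodule.mem_smul_span_singleton] at h
      obtain ⟨d, hd, hda⟩ := h
      have hdc : d = c := by
        rw [Algebra.smul_def, Algebra.smul_def] at hda
        exact halg (mul_right_cancel₀ ha0 hda)
      rwa [← hdc]
    · intro h
      rw [← hx₀gen]
      exact Submodule.smul_mem_smul h (Submodule.mem_span_singleton_self _)
  have hQmul : ∀ y ∈ L, ∃ c : O, Q y = c • Q x₀ := by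
    intro y hy
    have h := hQL y hy
    rw [← hx₀gen] at h
    obtain ⟨c, hc⟩ := Submodule.mem_span_singleton.1 h
    exact ⟨c, hc.symm⟩
  have hcompute : ∀ (t : O) (y : V), Q (y - t • x₀)
      = Q y + (t * t) • Q x₀ - t • QuadraticMap.polar (⇑Q) y x₀ := by
    intro t y
    rw [sub_eq_add_neg, ← neg_smul, QuadraticMap.map_add (⇑Q) y ((-t) • x₀),
      QuadraticMap.map_smul_of_tower, QuadraticMap.polar_smul_right_of_tower,
      neg_mul_neg, neg_smul, ← sub_eq_add_neg]
  -- the linear map O → L ⧸ M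
  set f : O →ₗ[O] (L ⧸ M) :=
    LinearMap.toSpanSingleton O _ (Submodule.Quotient.mk ⟨x₀, hx₀L⟩) with hf
  have hprime : (𝔭 : Ideal O).IsPrime := (IsLocalRing.maximalIdeal.isMaximal O).isPrime
  have hker : LinearMap.ker f = 𝔭 := by
    ext t
    rw [LinearMap.mem_ker, hf, LinearMap.toSpanSingleton_apply,
      ← Submodule.Quotient.mk_smul, Submodule.Quotient.mk_eq_zero, hmemM]
    have hco : ((t • (⟨x₀, hx₀L⟩ : L) : L) : V) = t • x₀ := rfl
    rw [hco, QuadraticMap.map_smul_of_tower, hpnl]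
    constructor
    · intro h
      rcases hprime.mem_or_mem h with h | h <;> exact h
    · exact fun h => Ideal.mul_mem_left _ _ h
  have hsurj : Function.Surjective f := by
    intro q
    obtain ⟨y, rfl⟩ := Submodule.Quotient.mk_surjective M q
    obtain ⟨c, hc⟩ := hQmul (y : V) y.2
    by_cases hcp : c ∈ 𝔭
    · refine ⟨0, ?_⟩
      rw [map_zero]
      symm
      rw [Submodule.Quotient.mk_eq_zero, hmemM, hc]
      exact (hpnl c).2 hcp
    · have hcu : IsUnit c := by
        by_contra hnu
        exact hcp ((IsLocalRing.mem_maximalIdeal c).2 hnu)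
      obtain ⟨δ, hδu, hδp⟩ := hres c hcu
      have h1 : Q ((y : V) - δ • x₀) ∈ 𝔭 • nL := by
        rw [hcompute, hc, ← add_smul]
        refine sub_mem ((hpnl _).2 ?_) (Submodule.smul_mem _ _ (htwoSL_p ?_))
        · rwa [← pow_two]
        · rw [htwoSL]
          exact Submodule.subset_span ⟨(y : V), y.2, x₀, hx₀L, rfl⟩
      refine ⟨δ, ?_⟩
      rw [hf, LinearMap.toSpanSingleton_apply, ← Submodule.Quotient.mk_smul,
        Submodule.Quotient.eq, hmemM]
      have hco : ((δ • (⟨x₀, hx₀L⟩ : L) - y : L) : V) = δ • x₀ - (y : V) := rfl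
      rw [hco, ← neg_sub ((y : V)) (δ • x₀), QuadraticMap.map_neg]
      exact h1
  exact ⟨((Submodule.quotEquivOfEq 𝔭 (LinearMap.ker f) hker.symm).trans
    (f.quotKerEquivOfSurjective hsurj)).symm⟩
end
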